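/- arXiv:2107.02679 — 5 statements merged into one kernel-verified Lean document; each statement's English description precedes it below -/
import Mathlib

section
/- Let Q be a finite graded poset of rank r (every maximal chain has length r). Then the rowmotion orbit of the empty order ideal of Q has cardinality exactly r + 2, where rowmotion ψ sends an order ideal I to the order ideal generated by the minimal elements of Q \ I. -/
/-- Rowmotion: `ψ(I)` is the order ideal generated by the minimal elements of the
complement of `I`. -/
def rowmotion {Q : Type*} [PartialOrder Q] (I : Set Q) : Set Q :=
  {x | ∃ m, m ∉ I ∧ (∀ y, y < m → y ∈ I) ∧ x ≤ m}

/-!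
On the rank ideals `{x | rk x < k}`, rowmotion raises `k` by one as long as `k ≤ r`: the minimal
elements of the complement are exactly the elements of rank `k`, and every element of rank at most
`k` lies below one of rank exactly `k` because ranks climb by one along covers up to `r`. Hence the
orbit of `∅` runs through `{rk < 0}, …, {rk < r + 1} = Q` and then returns to `∅`; these `r + 2`
ideals are distinct since every rank `0, …, r` is attained.
-/

open Function

theorem Function.ncard_range_iterate_eq_minimalPeriod {α : Type*} {f : α → α} {x : α}
    (hx : x ∈ periodicPts f) : (Set.range fun k => f^[k] x).ncard = minimalPeriod f x := by
  have hrange :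
      (Set.range fun k => f^[k] x) = (fun k => f^[k] x) '' Set.Iio (minimalPeriod f x) := by
    refine (Set.image_subset_range _ _).antisymm' ?_
    rintro _ ⟨k, rfl⟩
    exact ⟨k % minimalPeriod f x, Nat.mod_lt _ (minimalPeriod_pos_of_mem_periodicPts hx),
      iterate_mod_minimalPeriod_eq⟩
  rw [hrange, iterate_injOn_Iio_minimalPeriod.ncard_image, Set.ncard_Iio_nat]

theorem rowmotion_univ {Q : Type*} [PartialOrder Q] : rowmotion (Set.univ : Set Q) = ∅ :=
  Set.eq_empty_of_forall_notMem fun _ ⟨_, hm, _⟩ => hm trivial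

section GradedPoset

variable {Q : Type*} [PartialOrder Q] [Finite Q] {rk : Q → ℕ} {r : ℕ}

theorem strictMono_of_covBy_imp_eq_succ (hcov : ∀ x y : Q, x ⋖ y → rk y = rk x + 1) :
    StrictMono rk := by
  classical
  have := Fintype.ofFinite Q
  let _ := Fintype.toLocallyFiniteOrder (α := Q)
  exact (strictMono_iff_forall_covBy rk).2 fun x y hxy => (hcov x y hxy).symm ▸ Nat.lt_succ_self _

theorem rank_le_of_forall_lt (hmin : ∀ x : Q, (∀ y, ¬ y < x) → rk x = 0)
    (hcov : ∀ x y : Q, x ⋖ y → rk y = rk x + 1) {k : ℕ} {m : Q}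
    (hm : ∀ y, y < m → rk y < k) : rk m ≤ k := by
  by_cases hmin_m : ∀ y, ¬ y < m
  · exact (hmin m hmin_m).trans_le k.zero_le
  · push Not at hmin_m
    obtain ⟨y, hy⟩ := hmin_m
    obtain ⟨z, -, hzm⟩ := exists_le_covBy_of_lt hy
    rw [hcov z m hzm]
    exact hm z hzm.lt

theorem rank_le_of_forall_maximal_eq (hcov : ∀ x y : Q, x ⋖ y → rk y = rk x + 1)
    (hmax : ∀ x : Q, (∀ y, ¬ x < y) → rk x = r) (x : Q) : rk x ≤ r := by
  induction x using WellFoundedGT.induction with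
  | _ x ih =>
    by_cases hmax_x : ∀ y, ¬ x < y
    · exact (hmax x hmax_x).le
    · push Not at hmax_x
      obtain ⟨y, hy⟩ := hmax_x
      obtain ⟨z, hxz, -⟩ := exists_covBy_le_of_lt hy
      have := ih z hxz.lt
      rw [hcov x z hxz] at this
      omega

theorem exists_ge_rank_eq (hcov : ∀ x y : Q, x ⋖ y → rk y = rk x + 1)
    (hmax : ∀ x : Q, (∀ y, ¬ x < y) → rk x = r) {x : Q} {k : ℕ} (hxk : rk x ≤ k) (hk : k ≤ r) :
    ∃ y, x ≤ y ∧ rk y = k := by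
  induction k, hxk using Nat.le_induction with
  | base => exact ⟨x, le_rfl, rfl⟩
  | succ k _ ih =>
    obtain ⟨y, hxy, rfl⟩ := ih (by omega)
    have hy : ¬ ∀ z, ¬ y < z := fun h => by have := hmax y h; omega
    push Not at hy
    obtain ⟨z, hz⟩ := hy
    obtain ⟨w, hyw, -⟩ := exists_covBy_le_of_lt hz
    exact ⟨w, hxy.trans hyw.le, hcov y w hyw⟩

theorem exists_rank_eq [Nonempty Q] (hmin : ∀ x : Q, (∀ y, ¬ y < x) → rk x = 0)
    (hcov : ∀ x y : Q, x ⋖ y → rk y = rk x + 1)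
    (hmax : ∀ x : Q, (∀ y, ¬ x < y) → rk x = r) {k : ℕ} (hk : k ≤ r) : ∃ y, rk y = k := by
  obtain ⟨m, -, hm⟩ := (wellFounded_lt (α := Q)).has_min Set.univ Set.univ_nonempty
  obtain ⟨y, -, hy⟩ := exists_ge_rank_eq hcov hmax
    ((hmin m fun y => hm y trivial).trans_le k.zero_le) hk
  exact ⟨y, hy⟩

theorem rowmotion_setOf_rank_lt (hmin : ∀ x : Q, (∀ y, ¬ y < x) → rk x = 0)
    (hcov : ∀ x y : Q, x ⋖ y → rk y = rk x + 1)
    (hmax : ∀ x : Q, (∀ y, ¬ x < y) → rk x = r) {k : ℕ} (hk : k ≤ r) :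
    rowmotion {x | rk x < k} = {x | rk x < k + 1} := by
  have hmono := strictMono_of_covBy_imp_eq_succ hcov
  ext x
  simp only [rowmotion, Set.mem_ofPred_eq, Nat.lt_succ_iff]
  constructor
  · rintro ⟨m, -, hbelow, hxm⟩
    exact (hmono.monotone hxm).trans (rank_le_of_forall_lt hmin hcov hbelow)
  · intro hxk
    obtain ⟨m, hxm, rfl⟩ := exists_ge_rank_eq hcov hmax hxk hk
    exact ⟨m, lt_irrefl _, fun y hy => hmono hy, hxm⟩

theorem iterate_rowmotion_empty (hmin : ∀ x : Q, (∀ y, ¬ y < x) → rk x = 0)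
    (hcov : ∀ x y : Q, x ⋖ y → rk y = rk x + 1)
    (hmax : ∀ x : Q, (∀ y, ¬ x < y) → rk x = r) {k : ℕ} (hk : k ≤ r + 1) :
    rowmotion^[k] (∅ : Set Q) = {x | rk x < k} := by
  induction k with
  | zero => simp
  | succ k ih =>
    rw [iterate_succ_apply', ih (by omega),
      rowmotion_setOf_rank_lt hmin hcov hmax (k := k) (by omega)]

theorem isPeriodicPt_rowmotion_empty (hmin : ∀ x : Q, (∀ y, ¬ y < x) → rk x = 0)
    (hcov : ∀ x y : Q, x ⋖ y → rk y = rk x + 1)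
    (hmax : ∀ x : Q, (∀ y, ¬ x < y) → rk x = r) :
    IsPeriodicPt rowmotion (r + 2) (∅ : Set Q) := by
  have hfull : {x : Q | rk x < r + 1} = Set.univ :=
    Set.eq_univ_of_forall fun x => Nat.lt_succ_of_le (rank_le_of_forall_maximal_eq hcov hmax x)
  rw [IsPeriodicPt, IsFixedPt, iterate_succ_apply', iterate_rowmotion_empty hmin hcov hmax le_rfl,
    hfull, rowmotion_univ]

theorem minimalPeriod_rowmotion_empty [Nonempty Q] (hmin : ∀ x : Q, (∀ y, ¬ y < x) → rk x = 0)
    (hcov : ∀ x y : Q, x ⋖ y → rk y = rk x + 1)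
    (hmax : ∀ x : Q, (∀ y, ¬ x < y) → rk x = r) :
    minimalPeriod rowmotion (∅ : Set Q) = r + 2 := by
  have hper := isPeriodicPt_rowmotion_empty hmin hcov hmax
  refine (hper.minimalPeriod_le (by omega)).antisymm (not_lt.1 fun hlt => ?_)
  set p := minimalPeriod rowmotion (∅ : Set Q)
  have hp : 0 < p := hper.minimalPeriod_pos (by omega)
  obtain ⟨y, hy⟩ := exists_rank_eq hmin hcov hmax (k := p - 1) (by omega)
  have hmem : y ∈ rowmotion^[p] (∅ : Set Q) := by
    rw [iterate_rowmotion_empty hmin hcov hmax (by omega)]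
    show rk y < p
    omega
  rwa [iterate_minimalPeriod] at hmem

end GradedPoset

/-- For a finite graded poset `Q` of rank `r`, the rowmotion orbit of the empty
order ideal has cardinality exactly `r + 2`. -/
theorem rowmotion_orbit_empty_card {Q : Type*} [PartialOrder Q] [Fintype Q] [Nonempty Q]
    (r : ℕ) (rk : Q → ℕ)
    (hmin : ∀ x : Q, (∀ y, ¬ y < x) → rk x = 0)
    (hcov : ∀ x y : Q, x ⋖ y → rk y = rk x + 1)
    (hmax : ∀ x : Q, (∀ y, ¬ x < y) → rk x = r) :
    Set.ncard {I | ∃ k : ℕ, rowmotion^[k] (∅ : Set Q) = I} = r + 2 := by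
  have hper := isPeriodicPt_rowmotion_empty hmin hcov hmax
  rw [← minimalPeriod_rowmotion_empty hmin hcov hmax]
  exact ncard_range_iterate_eq_minimalPeriod (mk_mem_periodicPts (by omega) hper)
end

section
/- Let P be a finite poset and T : P → [q] a strictly order-preserving map (increasing tableau of height q). Then the K-promotion ψ(T) is again a strictly order-preserving map P → [q]. -/
open Classical in
/-- One swapping step of `K`-promotion: on each connected component of the Hasse
diagram of `P` restricted to elements labeled `1` or `i` that contains both labels,
swap the labels `1` and `i`. -/
noncomputable def kstep {P : Type*} [PartialOrder P] (i : ℕ) (T : P → ℕ) : P → ℕ :=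
  fun p =>
    if T p = 1 ∧ ∃ y, Relation.ReflTransGen
        (fun x z => (x ⋖ z ∨ z ⋖ x) ∧ (T x = 1 ∨ T x = i) ∧ (T z = 1 ∨ T z = i)) p y ∧
        T y = i then i
    else if T p = i ∧ ∃ y, Relation.ReflTransGen
        (fun x z => (x ⋖ z ∨ z ⋖ x) ∧ (T x = 1 ∨ T x = i) ∧ (T z = 1 ∨ T z = i)) p y ∧
        T y = 1 then 1
    else T p

open Classical in
/-- `K`-promotion of an increasing tableau of height `q`: perform the swapping steps
for `i = 2, …, q` in order, then cyclically decrement all labels (`1 ↦ q`,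
`j ↦ j - 1` otherwise). -/
noncomputable def kpromo {P : Type*} [PartialOrder P] (q : ℕ) (T : P → ℕ) : P → ℕ :=
  fun p =>
    if (List.range' 2 (q - 1)).foldl (fun S i => kstep i S) T p = 1 then q
    else (List.range' 2 (q - 1)).foldl (fun S i => kstep i S) T p - 1

section Aux

variable {P : Type*} [PartialOrder P]

/-- The connectivity relation used in `kstep`. -/
abbrev kconn (i : ℕ) (T : P → ℕ) : P → P → Prop :=
  Relation.ReflTransGen
    (fun x z => (x ⋖ z ∨ z ⋖ x) ∧ (T x = 1 ∨ T x = i) ∧ (T z = 1 ∨ T z = i))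

lemma ks_cases (i : ℕ) (S : P → ℕ) (p : P) :
    kstep i S p = S p ∨
    (S p = 1 ∧ kstep i S p = i ∧ ∃ y, kconn i S p y ∧ S y = i) ∨
    (S p = i ∧ kstep i S p = 1 ∧ ∃ y, kconn i S p y ∧ S y = 1) := by
  unfold kstep
  split_ifs with h1 h2
  · exact Or.inr (Or.inl ⟨h1.1, rfl, h1.2⟩)
  · exact Or.inr (Or.inr ⟨h2.1, rfl, h2.2⟩)
  · exact Or.inl rfl

lemma ks_eq_i {i : ℕ} {S : P → ℕ} {p y : P}
    (hp : S p = 1) (hy : kconn i S p y) (hyi : S y = i) : kstep i S p = i := by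
  unfold kstep
  split_ifs with h1 h2
  · rfl
  · exact absurd ⟨hp, y, hy, hyi⟩ h1
  · exact absurd ⟨hp, y, hy, hyi⟩ h1

lemma ks_eq_one {i : ℕ} (hi : i ≠ 1) {S : P → ℕ} {p y : P}
    (hp : S p = i) (hy : kconn i S p y) (hy1 : S y = 1) : kstep i S p = 1 := by
  unfold kstep
  split_ifs with h1 h2
  · exact absurd (hp.symm.trans h1.1) hi
  · rfl
  · exact absurd ⟨hp, y, hy, hy1⟩ h2

/-- Invariant maintained through the swapping steps. -/
def KInv (q i : ℕ) (S : P → ℕ) : Prop :=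
  (∀ p, 1 ≤ S p ∧ S p ≤ q) ∧
  (∀ x y : P, x < y → S x ≠ 1 → S y ≠ 1 → S x < S y) ∧
  (∀ x y : P, x < y → S x = 1 → i < S y) ∧
  (∀ x y : P, x < y → S y = 1 → S x ≤ i)

lemma inv_step {q i : ℕ} (hi : 1 ≤ i) (hiq : i + 1 ≤ q) {S : P → ℕ}
    (h : KInv q i S) : KInv q (i + 1) (kstep (i + 1) S) := by
  obtain ⟨h1, h2, h3, h4⟩ := h
  -- Key: a hole (label 1) below an element labeled i+1 must be covered by it.
  have keyCov : ∀ x y : P, x < y → S x = 1 → S y = i + 1 → x ⋖ y := by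
    intro x y hxy hx1 hyj
    refine ⟨hxy, fun m hxm hmy => ?_⟩
    have hm := h3 x m hxm hx1
    have := h2 m y hmy (by omega) (by omega)
    omega
  refine ⟨?_, ?_, ?_, ?_⟩
  · -- bounds
    intro p
    rcases ks_cases (i+1) S p with hc | ⟨_, hc, _⟩ | ⟨_, hc, _⟩
    · rw [hc]; exact h1 p
    · rw [hc]; omega
    · rw [hc]; omega
  · -- strict increase on non-holes
    intro x y hxy hx hy
    rcases ks_cases (i+1) S x with hcx | ⟨hx1, hcx, z, hz, hzj⟩ | ⟨hxj, hcx, _⟩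
    · rcases ks_cases (i+1) S y with hcy | ⟨hy1, hcy, w, hw, hw1⟩ | ⟨hyj, hcy, _⟩
      · rw [hcx, hcy]
        exact h2 x y hxy (fun h' => hx (hcx.trans h')) (fun h' => hy (hcy.trans h'))
      · have := h4 x y hxy hy1
        rw [hcx, hcy]
        have hxne1 : S x ≠ 1 := fun h' => by
          have := h3 x y hxy h'; omega
        omega
      · rw [hcy] at hy; exact absurd rfl hy
    · -- x : 1 → i+1
      rcases ks_cases (i+1) S y with hcy | ⟨hy1, hcy, _⟩ | ⟨hyj, hcy, _⟩
      · have h3y := h3 x y hxy hx1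
        rw [hcx, hcy]
        rcases Nat.lt_or_ge (i+1) (S y) with h' | h'
        · exact h'
        · exfalso
          have hyj : S y = i + 1 := by omega
          have hcov := keyCov x y hxy hx1 hyj
          have : kstep (i+1) S y = 1 :=
            ks_eq_one (by omega)
              hyj (Relation.ReflTransGen.single ⟨Or.inr hcov, Or.inr hyj, Or.inl hx1⟩) hx1
          omega
      · exfalso; have := h3 x y hxy hx1; omega
      · rw [hcy] at hy; exact absurd rfl hy
    · rw [hcx] at hx; exact absurd rfl hx
  · -- labels above a hole exceed i+1
    intro x y hxy hkx
    rcases ks_cases (i+1) S x with hcx | ⟨hx1, hcx, _⟩ | ⟨hxj, hcx, z, hz, hz1⟩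
    · have hx1 : S x = 1 := hcx.symm.trans hkx
      have h3y := h3 x y hxy hx1
      have hne : S y ≠ i + 1 := by
        intro hyj
        have hcov := keyCov x y hxy hx1 hyj
        have : kstep (i+1) S x = i + 1 :=
          ks_eq_i hx1 (Relation.ReflTransGen.single ⟨Or.inl hcov, Or.inl hx1, Or.inr hyj⟩) hyj
        omega
      rcases ks_cases (i+1) S y with hcy | ⟨hy1, _, _⟩ | ⟨hyj, _, _⟩
      · rw [hcy]; omega
      · omega
      · omega
    · omega
    · have hyne1 : S y ≠ 1 := by
        intro hy1
        have := h4 x y hxy hy1; omega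
      have := h2 x y hxy (by omega) hyne1
      rcases ks_cases (i+1) S y with hcy | ⟨hy1, _, _⟩ | ⟨hyj, _, _⟩
      · rw [hcy]; omega
      · omega
      · omega
  · -- labels below a hole are at most i+1
    intro x y hxy hky
    rcases ks_cases (i+1) S y with hcy | ⟨hy1, hcy, _⟩ | ⟨hyj, hcy, z, hz, hz1⟩
    · have hy1 : S y = 1 := hcy.symm.trans hky
      have hxne1 : S x ≠ 1 := by
        intro hx1
        have := h3 x y hxy hx1; omega
      have hxle := h4 x y hxy hy1
      rcases ks_cases (i+1) S x with hcx | ⟨hx1, _, _⟩ | ⟨hxj, _, _⟩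
      · rw [hcx]; omega
      · omega
      · omega
    · omega
    · by_cases hx1 : S x = 1
      · have hcov := keyCov x y hxy hx1 hyj
        have : kstep (i+1) S x = i + 1 :=
          ks_eq_i hx1 (Relation.ReflTransGen.single ⟨Or.inl hcov, Or.inl hx1, Or.inr hyj⟩) hyj
        omega
      · have := h2 x y hxy hx1 (by omega)
        rcases ks_cases (i+1) S x with hcx | ⟨hx1', _, _⟩ | ⟨hxj, _, _⟩
        · rw [hcx]; omega
        · omega
        · omega

lemma inv_fold {q : ℕ} : ∀ (n i : ℕ), 1 ≤ i → i + n ≤ q → ∀ S : P → ℕ, KInv q i S →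
    KInv q (i + n) ((List.range' (i + 1) n).foldl (fun S j => kstep j S) S) := by
  intro n
  induction n with
  | zero => intro i _ _ S hS; simpa using hS
  | succ n ih =>
    intro i hi hiq S hS
    rw [List.range'_succ, List.foldl_cons]
    have h' := ih (i + 1) (by omega) (by omega) (kstep (i + 1) S)
      (inv_step hi (by omega) hS)
    rw [show i + (n + 1) = (i + 1) + n from by omega]
    exact h'

end Aux

/-- `K`-promotion of an increasing tableau of height `q` on a finite poset `P` is
again an increasing tableau of height `q`, i.e. a strictly order-preserving map
`P → {1, …, q}`. -/
theorem kpromo_isIncreasingTableau {P : Type*} [PartialOrder P] [Fintype P]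
    (q : ℕ) (hq : 0 < q) (T : P → ℕ)
    (hT1 : ∀ p, 1 ≤ T p ∧ T p ≤ q)
    (hTmono : ∀ x y : P, x < y → T x < T y) :
    (∀ p, 1 ≤ kpromo q T p ∧ kpromo q T p ≤ q) ∧
    (∀ x y : P, x < y → kpromo q T x < kpromo q T y) := by
  have hinv : KInv q 1 T :=
    ⟨hT1, fun x y hxy _ _ => hTmono x y hxy,
      fun x y hxy hx1 => by have := hTmono x y hxy; omega,
      fun x y hxy hy1 => by have := hTmono x y hxy; have := (hT1 x).1; omega⟩
  have hfold := inv_fold (q - 1) 1 le_rfl (by omega) T hinv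
  rw [show (1 : ℕ) + (q - 1) = q from by omega] at hfold
  norm_num at hfold
  obtain ⟨hb, hm2, hm3, hm4⟩ := hfold
  constructor
  · intro p
    have hbp := hb p
    unfold kpromo
    split_ifs with h
    · omega
    · omega
  · intro x y hxy
    have hbx := hb x
    have hby := hb y
    have hx1 : (List.range' 2 (q - 1)).foldl (fun S j => kstep j S) T x ≠ 1 := by
      intro h
      have := hm3 x y hxy h
      have := (hb y).2
      omega
    unfold kpromo
    split_ifs with h h' h'
    · exact absurd h hx1
    · exact absurd h hx1
    · omega
    · have := hm2 x y hxy hx1 h'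
      omega
end

section
/- Let P be a finite graded poset with unique minimum element 0̂ and unique maximum element 1̂, such that the bottom tree and top tree of P have nonempty intersection. Suppose V is an increasing tableau of height z on P with D T(V) = D T(ψ(V)), i.e., V and its K-promotion agree on the doubletree of P. Then z = rank(P) + 1 and V is the unique minimal tableau, which labels each element x by one plus the length of the longest chain ending at x. -/
open SimpleGraph OrderDual

section Grading

variable {P : Type*} [PartialOrder P] {f g : P → ℕ}

theorem add_le_add_bot_of_exists_covBy [WellFoundedLT P] [OrderBot P] {x : P}
    (h : ∀ p ≤ x, p ≠ ⊥ → ∃ w, w ⋖ p ∧ f p + g w ≤ f w + g p) :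
    f x + g ⊥ ≤ f ⊥ + g x := by
  induction x using WellFoundedLT.induction with
  | _ x ih =>
    rcases eq_or_ne x ⊥ with rfl | hx
    · exact le_rfl
    obtain ⟨w, hwx, hfg⟩ := h x le_rfl hx
    have := ih w hwx.lt fun p hp => h p (hp.trans hwx.le)
    omega

theorem add_le_add_top_of_exists_covBy [WellFoundedGT P] [OrderTop P] {x : P}
    (h : ∀ p, x ≤ p → p ≠ ⊤ → ∃ y, p ⋖ y ∧ f p + g y ≤ f y + g p) :
    f x + g ⊤ ≤ f ⊤ + g x :=
  add_le_add_bot_of_exists_covBy (P := Pᵒᵈ) (f := f ∘ ofDual) (g := g ∘ ofDual)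
    (x := toDual x) fun p hp hpt => by
      obtain ⟨y, hpy, hfg⟩ := h (ofDual p) hp hpt
      exact ⟨toDual y, hpy.toDual, hfg⟩

theorem add_le_add_bot_of_covBy [WellFoundedLT P] [WellFoundedGT P] [OrderBot P]
    (h : ∀ w p, w ⋖ p → f p + g w ≤ f w + g p) (x : P) : f x + g ⊥ ≤ f ⊥ + g x :=
  add_le_add_bot_of_exists_covBy fun p _ hp =>
    (exists_covBy_of_wellFoundedGT (not_isMin_iff_ne_bot.2 hp)).imp fun w hw => ⟨hw, h w p hw⟩

theorem add_le_add_top_of_covBy [WellFoundedLT P] [WellFoundedGT P] [OrderTop P]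
    (h : ∀ p y, p ⋖ y → f p + g y ≤ f y + g p) (x : P) : f x + g ⊤ ≤ f ⊤ + g x :=
  add_le_add_top_of_exists_covBy fun p _ hp =>
    (exists_covBy_of_wellFoundedLT (not_isMax_iff_ne_top.2 hp)).imp fun y hy => ⟨hy, h p y hy⟩

end Grading

section Swaps

variable {P : Type*} [PartialOrder P]

theorem kstep_one (T : P → ℕ) : kstep 1 T = T := by
  funext p
  unfold kstep
  split_ifs with h
  · exact h.1.symm
  · rfl

theorem kstep_eq_self_or (i : ℕ) (T : P → ℕ) (p : P) :
    kstep i T p = T p ∨ (T p = 1 ∧ kstep i T p = i) ∨ (T p = i ∧ kstep i T p = 1) := by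
  unfold kstep
  split_ifs with h₁ h₂
  · exact .inr (.inl ⟨h₁.1, rfl⟩)
  · exact .inr (.inr ⟨h₂.1, rfl⟩)
  · exact .inl rfl

theorem exists_adj_of_kstep_ne {i : ℕ} {T : P → ℕ} {p : P} (h : kstep i T p ≠ T p) :
    ∃ w, (hasse P).Adj p w ∧ (T w = 1 ∨ T w = i) := by
  unfold kstep at h
  split_ifs at h with h₁ h₂
  · obtain ⟨hp, y, hpy, hy⟩ := h₁
    rcases hpy.cases_head with rfl | ⟨w, ⟨hadj, -, hw⟩, -⟩
    · exact absurd hy.symm h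
    · exact ⟨w, hadj, hw⟩
  · obtain ⟨hp, y, hpy, hy⟩ := h₂
    rcases hpy.cases_head with rfl | ⟨w, ⟨hadj, -, hw⟩, -⟩
    · exact absurd hy.symm h
    · exact ⟨w, hadj, hw⟩
  · exact absurd rfl h

theorem kstep_eq_of_adj {i : ℕ} {T : P → ℕ} {p q : P} (hpq : (hasse P).Adj p q)
    (hp : T p = 1) (hq : T q = i) : kstep i T p = i := by
  unfold kstep
  rw [if_pos ⟨hp, q, .single ⟨hpq, .inl hp, .inr hq⟩, hq⟩]

/-- The tableau obtained from `V` by the swapping steps for `i = 2, …, j`. -/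
noncomputable def ksteps (V : P → ℕ) (j : ℕ) : P → ℕ :=
  (List.range' 2 (j - 1)).foldl (fun S i => kstep i S) V

theorem kpromo_apply (q : ℕ) (V : P → ℕ) (p : P) :
    kpromo q V p = if ksteps V q p = 1 then q else ksteps V q p - 1 :=
  rfl

theorem ksteps_succ (V : P → ℕ) (j : ℕ) : ksteps V (j + 1) = kstep (j + 1) (ksteps V j) := by
  cases j with
  | zero => exact (kstep_one V).symm
  | succ j =>
    rw [ksteps, ksteps, show j + 1 + 1 - 1 = j + 1 from rfl, List.range'_concat,
      List.foldl_append, List.foldl_cons, List.foldl_nil, show 2 + 1 * j = j + 1 + 1 by omega,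
      Nat.add_sub_cancel]

variable {V : P → ℕ} {p : P}

theorem ksteps_eq_or_le (j : ℕ) : ksteps V j p = V p ∨ ksteps V j p ≤ j := by
  induction j with
  | zero => exact .inl rfl
  | succ j ih =>
    rw [ksteps_succ]
    rcases kstep_eq_self_or (j + 1) (ksteps V j) p with h | ⟨-, h⟩ | ⟨-, h⟩ <;> rw [h] <;> omega

theorem eq_of_ksteps_eq_succ {j : ℕ} (h : ksteps V j p = j + 1) : V p = j + 1 := by
  have := ksteps_eq_or_le (V := V) (p := p) j
  omega

theorem le_of_ksteps_eq_one {j : ℕ} (hj : 1 ≤ j) (h : ksteps V j p = 1) : V p ≤ j := by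
  induction j, hj using Nat.le_induction with
  | base => exact h.le
  | succ j hj ih =>
    rw [ksteps_succ] at h
    rcases kstep_eq_self_or (j + 1) (ksteps V j) p with h' | ⟨-, h'⟩ | ⟨h', -⟩
    · exact (ih (h' ▸ h)).trans j.le_succ
    · omega
    · exact (eq_of_ksteps_eq_succ h').le

theorem ksteps_pred_eq_one (j : ℕ) (h₁ : ksteps V j p ≠ 1) (hV : ksteps V j p ≠ V p) :
    ksteps V (ksteps V j p - 1) p = 1 := by
  induction j with
  | zero => exact absurd rfl hV
  | succ j ih =>
    rw [ksteps_succ] at h₁ hV ⊢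
    rcases kstep_eq_self_or (j + 1) (ksteps V j) p with h | ⟨h, h'⟩ | ⟨-, h⟩
    · rw [h] at h₁ hV ⊢
      exact ih h₁ hV
    · rwa [h', Nat.add_sub_cancel]
    · exact absurd h h₁

theorem lt_ksteps_of_ksteps_eq_one {j k : ℕ} (hjk : j ≤ k) (hj : ksteps V j p = 1)
    (hk : ksteps V k p ≠ 1) : j < ksteps V k p := by
  induction k, hjk using Nat.le_induction with
  | base => exact absurd hj hk
  | succ k hjk ih =>
    rw [ksteps_succ] at hk ⊢
    rcases kstep_eq_self_or (k + 1) (ksteps V k) p with h | ⟨-, h⟩ | ⟨-, h⟩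
    · rw [h] at hk ⊢
      exact ih hk
    · omega
    · exact absurd h hk

theorem ne_of_hasse_adj (hV : ∀ x y : P, x < y → V x < V y) {q : P} (h : (hasse P).Adj p q) :
    V p ≠ V q :=
  h.elim (fun h => (hV _ _ h.lt).ne) fun h => (hV _ _ h.lt).ne'

theorem ksteps_ne_one_of_adj (hV : ∀ x y : P, x < y → V x < V y) (j : ℕ) {q : P}
    (hpq : (hasse P).Adj p q) (hp : ksteps V j p = 1) : ksteps V j q ≠ 1 := by
  induction j generalizing p q with
  | zero => exact fun hq => ne_of_hasse_adj hV hpq (hp.trans hq.symm)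
  | succ j ih =>
    have hold : ∀ x, ksteps V (j + 1) x = 1 → ksteps V j x = 1 ∨ ksteps V j x = j + 1 := by
      intro x hx
      rw [ksteps_succ] at hx
      rcases kstep_eq_self_or (j + 1) (ksteps V j) x with h | ⟨h, -⟩ | ⟨h, -⟩
      · exact .inl (h ▸ hx)
      · exact .inl h
      · exact .inr h
    intro hq
    rcases hold p hp with hp' | hp' <;> rcases hold q hq with hq' | hq'
    · exact ih hpq hp' hq'
    · have := ksteps_succ V j ▸ kstep_eq_of_adj hpq hp' hq'
      exact ih hpq hp' (by omega)
    · have := ksteps_succ V j ▸ kstep_eq_of_adj hpq.symm hq' hp'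
      exact ih hpq.symm hq' (by omega)
    · exact ne_of_hasse_adj hV hpq
        ((eq_of_ksteps_eq_succ hp').trans (eq_of_ksteps_eq_succ hq').symm)

theorem exists_covBy_ksteps_eq_one (hV : ∀ x y : P, x < y → V x < V y) (j : ℕ)
    (hp : ksteps V j p = 1) (hVp : V p ≠ 1) : ∃ w, w ⋖ p ∧ ksteps V (V p - 1) w = 1 := by
  induction j with
  | zero => exact absurd hp hVp
  | succ j ih =>
    rw [ksteps_succ] at hp
    rcases kstep_eq_self_or (j + 1) (ksteps V j) p with h | ⟨h, -⟩ | ⟨h, -⟩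
    · exact ih (h ▸ hp)
    · exact ih h
    have hVpj := eq_of_ksteps_eq_succ h
    obtain ⟨w, hadj, hw | hw⟩ := exists_adj_of_kstep_ne (by rw [hp, h]; omega)
    · have hVw := le_of_ksteps_eq_one (by omega) hw
      refine ⟨w, hadj.resolve_left fun hpw => ?_, by rwa [hVpj, Nat.add_sub_cancel]⟩
      have := hV p w hpw.lt
      omega
    · exact absurd ((eq_of_ksteps_eq_succ hw).trans hVpj.symm) (ne_of_hasse_adj hV hadj).symm

end Swaps

section FixedPoints

variable {P : Type*} [PartialOrder P] {z : ℕ} {V : P → ℕ} {p : P}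

theorem ksteps_of_kpromo_eq_self (hVp : 1 ≤ V p) (h : kpromo z V p = V p) :
    (ksteps V z p = 1 ∧ V p = z) ∨ ksteps V z p = V p + 1 := by
  rw [kpromo_apply] at h
  split_ifs at h with h₁
  · exact .inl ⟨h₁, h.symm⟩
  · exact .inr (by omega)

theorem le_of_kpromo_eq_self_of_ksteps_eq_one {j : ℕ} (hVp : 1 ≤ V p)
    (h : kpromo z V p = V p) (hjz : j ≤ z) (hj : ksteps V j p = 1) : j ≤ V p := by
  rcases ksteps_of_kpromo_eq_self hVp h with ⟨-, rfl⟩ | hz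
  · exact hjz
  · have := lt_ksteps_of_ksteps_eq_one hjz hj (by omega)
    omega

theorem exists_covBy_add_one_eq_of_kpromo_eq_self (hV1 : ∀ q, 1 ≤ V q ∧ V q ≤ z)
    (hV : ∀ x y : P, x < y → V x < V y) (h : kpromo z V p = V p) (hVp : V p ≠ 1)
    (hcov : ∀ w, w ⋖ p → kpromo z V w = V w) : ∃ w, w ⋖ p ∧ V w + 1 = V p := by
  have hpos := (hV1 p).1
  have hhole : ∃ w, w ⋖ p ∧ ksteps V (V p - 1) w = 1 := by
    rcases ksteps_of_kpromo_eq_self hpos h with ⟨h₁, -⟩ | hz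
    · exact exists_covBy_ksteps_eq_one hV z h₁ hVp
    · have := ksteps_pred_eq_one (V := V) (p := p) z (by omega) (by omega)
      rw [hz, Nat.add_sub_cancel] at this
      exact exists_covBy_ksteps_eq_one hV (V p) this hVp
  obtain ⟨w, hwp, hw⟩ := hhole
  have := le_of_kpromo_eq_self_of_ksteps_eq_one (hV1 w).1 (hcov w hwp)
    (by have := (hV1 p).2; omega) hw
  have := hV w p hwp.lt
  exact ⟨w, hwp, by omega⟩

/-- Being fixed, `p` is filled at step `V p + 1`; the hole leaving it moves to an upper
cover, since no two holes are ever adjacent. -/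
theorem exists_covBy_eq_add_one_of_kpromo_eq_self (hpos : ∀ q, 1 ≤ V q)
    (hV : ∀ x y : P, x < y → V x < V y) (h : kpromo z V p = V p) (hpz : V p < z) :
    ∃ y, p ⋖ y ∧ V y = V p + 1 := by
  have hVp := hpos p
  have hz : ksteps V z p = V p + 1 := by
    rcases ksteps_of_kpromo_eq_self hVp h with ⟨-, h⟩ | h
    · omega
    · exact h
  have hhole : ksteps V (V p) p = 1 := by
    simpa [hz] using ksteps_pred_eq_one (V := V) (p := p) z (by omega) (by omega)
  have hfilled : ksteps V (V p + 1) p ≠ 1 := fun h₁ => by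
    have := lt_ksteps_of_ksteps_eq_one hpz h₁ (by omega : ksteps V z p ≠ 1)
    omega
  have hmoved : kstep (V p + 1) (ksteps V (V p)) p ≠ ksteps V (V p) p := by
    rwa [hhole, ← ksteps_succ]
  obtain ⟨y, hadj, hy | hy⟩ := exists_adj_of_kstep_ne hmoved
  · exact absurd hy (ksteps_ne_one_of_adj hV (V p) hadj hhole)
  · have hVy := eq_of_ksteps_eq_succ hy
    refine ⟨y, hadj.resolve_right fun hyp => ?_, hVy⟩
    have := hV y p hyp.lt
    omega

end FixedPoints

/-- Let `P` be a finite graded poset with a unique minimum `⊥` and unique maximum `⊤`,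
whose bottom tree and top tree intersect.  If an increasing tableau `V` of height `z`
agrees with its `K`-promotion on the doubletree (the set of elements whose principal
ideal or principal filter is a chain), then `z = rank(P) + 1` and `V` is the minimal
tableau `x ↦ rk x + 1`. -/
theorem minimal_tableau_of_doubletree_fixed {P : Type*} [PartialOrder P] [Fintype P]
    [OrderBot P] [OrderTop P]
    (r : ℕ) (rk : P → ℕ)
    (hmin : rk ⊥ = 0)
    (hcov : ∀ x y : P, x ⋖ y → rk y = rk x + 1)
    (hmax : rk ⊤ = r)
    (hBTTT : ∃ x : P, IsChain (· ≤ ·) {y | y ≤ x} ∧ IsChain (· ≤ ·) {y | x ≤ y})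
    (z : ℕ) (V : P → ℕ)
    (hV1 : ∀ p, 1 ≤ V p ∧ V p ≤ z)
    (hVmono : ∀ x y : P, x < y → V x < V y)
    (hDT : ∀ x : P, (IsChain (· ≤ ·) {y | y ≤ x} ∨ IsChain (· ≤ ·) {y | x ≤ y}) →
      kpromo z V x = V x) :
    z = r + 1 ∧ ∀ x, V x = rk x + 1 := by
  obtain ⟨x₀, hIic, hIci⟩ := hBTTT
  have hfix : ∀ x, x ≤ x₀ ∨ x₀ ≤ x → kpromo z V x = V x := fun x hx => hDT x <| hx.imp
    (fun h => hIic.mono fun _ hy => le_trans hy h) (fun h => hIci.mono fun _ hy => le_trans h hy)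
  have hbot : V ⊥ = 1 := by
    by_contra hb
    obtain ⟨w, hw, -⟩ := exists_covBy_add_one_eq_of_kpromo_eq_self hV1 hVmono
      (hfix ⊥ (.inl bot_le)) hb fun w hw => absurd hw.lt not_lt_bot
    exact not_lt_bot hw.lt
  have htop : V ⊤ = z := by
    by_contra ht
    obtain ⟨y, hy, -⟩ := exists_covBy_eq_add_one_of_kpromo_eq_self (fun q => (hV1 q).1) hVmono
      (hfix ⊤ (.inr le_top)) (lt_of_le_of_ne (hV1 ⊤).2 ht)
    exact not_top_lt hy.lt
  have hdown : V x₀ + rk ⊥ ≤ V ⊥ + rk x₀ := add_le_add_bot_of_exists_covBy fun p hp hpb => by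
    obtain ⟨w, hwp, hw⟩ := exists_covBy_add_one_eq_of_kpromo_eq_self hV1 hVmono
      (hfix p (.inl hp)) (hbot ▸ (hVmono ⊥ p (bot_lt_iff_ne_bot.2 hpb)).ne')
      fun w hw => hfix w (.inl (hw.le.trans hp))
    exact ⟨w, hwp, by rw [hcov w p hwp]; omega⟩
  have hup : rk x₀ + V ⊤ ≤ rk ⊤ + V x₀ := add_le_add_top_of_exists_covBy fun p hp hpt => by
    obtain ⟨y, hpy, hy⟩ := exists_covBy_eq_add_one_of_kpromo_eq_self (fun q => (hV1 q).1) hVmono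
      (hfix p (.inr hp)) (htop ▸ hVmono p ⊤ (lt_top_iff_ne_top.2 hpt))
    exact ⟨y, hpy, by rw [hcov p y hpy]; omega⟩
  have hlow := add_le_add_bot_of_covBy (f := rk) (g := V) fun w p h => by
    rw [hcov w p h]; have := hVmono w p h.lt; omega
  have hhigh := add_le_add_top_of_covBy (f := V) (g := rk) fun p y h => by
    rw [hcov p y h]; have := hVmono p y h.lt; omega
  have hz : z = r + 1 := by have := hlow ⊤; omega
  exact ⟨hz, fun x => by have := hlow x; have := hhigh x; omega⟩
end

section
/- Let P be a finite poset and q a positive integer. If T is an increasing tableau of height q on P, then the set of labels used by ψ^q(T) equals the set of labels used by T, where ψ is K-promotion on Inc^q(P). -/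
section KStep

variable {P : Type*} [PartialOrder P] (i : ℕ) (T : P → ℕ)

def kstepAdj (x z : P) : Prop :=
  (x ⋖ z ∨ z ⋖ x) ∧ (T x = 1 ∨ T x = i) ∧ (T z = 1 ∨ T z = i)

instance : Std.Symm (kstepAdj i T) where
  symm _ _ h := ⟨h.1.symm, h.2.2, h.2.1⟩

/-- Lying in the same component of the Hasse diagram restricted to the labels `1` and `i`. -/
def kstepConn : P → P → Prop :=
  Relation.ReflTransGen (kstepAdj i T)

instance : Std.Symm (kstepConn i T) :=
  Relation.ReflTransGen.stdSymm

open Classical in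
theorem kstep_apply (p : P) :
    kstep i T p =
      if T p = 1 ∧ ∃ y, kstepConn i T p y ∧ T y = i then i
      else if T p = i ∧ ∃ y, kstepConn i T p y ∧ T y = 1 then 1
      else T p :=
  rfl

variable {i T}

theorem kstep_eq_one_of_kstepConn {p y : P} (hp : T p = 1) (hpy : kstepConn i T p y)
    (hy : T y = i) : kstep i T y = 1 := by
  rw [kstep_apply]
  split_ifs with h₁ h₂
  · exact hy.symm.trans h₁.1
  · rfl
  · exact absurd ⟨hy, p, symm hpy, hp⟩ h₂

theorem kstep_eq_of_kstepConn {p y : P} (hp : T p = i) (hpy : kstepConn i T p y)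
    (hy : T y = 1) : kstep i T y = i := by
  rw [kstep_apply, if_pos ⟨hy, p, symm hpy, hp⟩]

variable (i T)

theorem range_kstep : Set.range (kstep i T) = Set.range T := by
  apply Set.Subset.antisymm
  · rintro _ ⟨p, rfl⟩
    rw [kstep_apply]
    split_ifs with h₁ h₂
    · exact h₁.2.imp fun _ hy ↦ hy.2
    · exact h₂.2.imp fun _ hy ↦ hy.2
    · exact ⟨p, rfl⟩
  · rintro _ ⟨p, rfl⟩
    by_cases h₁ : T p = 1 ∧ ∃ y, kstepConn i T p y ∧ T y = i
    · obtain ⟨hp, y, hpy, hy⟩ := h₁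
      exact ⟨y, (kstep_eq_one_of_kstepConn hp hpy hy).trans hp.symm⟩
    by_cases h₂ : T p = i ∧ ∃ y, kstepConn i T p y ∧ T y = 1
    · obtain ⟨hp, y, hpy, hy⟩ := h₂
      exact ⟨y, (kstep_eq_of_kstepConn hp hpy hy).trans hp.symm⟩
    exact ⟨p, by rw [kstep_apply, if_neg h₁, if_neg h₂]⟩

theorem range_foldl_kstep (l : List ℕ) :
    Set.range (l.foldl (fun S i ↦ kstep i S) T) = Set.range T := by
  induction l generalizing T with
  | nil => rfl
  | cons a l ih => rw [List.foldl_cons, ih, range_kstep]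

end KStep

section CyclicPred

def cyclicPred (q j : ℕ) : ℕ := if j = 1 then q else j - 1

variable {q : ℕ}

theorem cyclicPred_iterate_of_lt {k j : ℕ} (hk : k < j) : (cyclicPred q)^[k] j = j - k := by
  induction k with
  | zero => rfl
  | succ k ih =>
    rw [Function.iterate_succ_apply', ih (by omega), cyclicPred, if_neg (by omega)]
    omega

theorem cyclicPred_iterate_self {j : ℕ} (hj : 1 ≤ j) : (cyclicPred q)^[j] j = q := by
  obtain ⟨k, rfl⟩ : ∃ k, j = k + 1 := ⟨j - 1, by omega⟩
  rw [Function.iterate_succ_apply', cyclicPred_iterate_of_lt (by omega), cyclicPred,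
    if_pos (by omega)]

theorem cyclicPred_iterate_period {j : ℕ} (hj₁ : 1 ≤ j) (hjq : j ≤ q) :
    (cyclicPred q)^[q] j = j :=
  calc (cyclicPred q)^[q] j = (cyclicPred q)^[q - j] ((cyclicPred q)^[j] j) := by
        rw [← Function.iterate_add_apply, Nat.sub_add_cancel hjq]
    _ = q - (q - j) := by rw [cyclicPred_iterate_self hj₁, cyclicPred_iterate_of_lt (by omega)]
    _ = j := by omega

end CyclicPred

section KPromo

variable {P : Type*} [PartialOrder P]

theorem kpromo_eq_cyclicPred_comp (q : ℕ) (T : P → ℕ) :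
    kpromo q T = cyclicPred q ∘ (List.range' 2 (q - 1)).foldl (fun S i ↦ kstep i S) T :=
  rfl

theorem range_kpromo (q : ℕ) (T : P → ℕ) :
    Set.range (kpromo q T) = cyclicPred q '' Set.range T := by
  rw [kpromo_eq_cyclicPred_comp, Set.range_comp, range_foldl_kstep]

theorem range_iterate_kpromo (q n : ℕ) (T : P → ℕ) :
    Set.range ((kpromo q)^[n] T) = (cyclicPred q)^[n] '' Set.range T := by
  induction n with
  | zero => exact (Set.image_id _).symm
  | succ n ih =>
    rw [Function.iterate_succ_apply', range_kpromo, ih, Function.iterate_succ', Set.image_comp]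

end KPromo

theorem kpromo_pow_q_labels_general {P : Type*} [PartialOrder P]
    (q : ℕ) (T : P → ℕ)
    (hT1 : ∀ p, 1 ≤ T p ∧ T p ≤ q) :
    Set.range ((kpromo q)^[q] T) = Set.range T := by
  rw [range_iterate_kpromo]
  refine Set.EqOn.image_eq_self ?_
  rintro _ ⟨p, rfl⟩
  exact cyclicPred_iterate_period (hT1 p).1 (hT1 p).2

/-- For an increasing tableau `T` of height `q` on a finite poset `P`, the set of
labels used by `ψ^q(T)` equals the set of labels used by `T`. -/
theorem kpromo_pow_q_labels {P : Type*} [PartialOrder P] [Fintype P]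
    (q : ℕ) (T : P → ℕ)
    (hT1 : ∀ p, 1 ≤ T p ∧ T p ≤ q)
    (hTmono : ∀ x y : P, x < y → T x < T y) :
    Set.range ((kpromo q)^[q] T) = Set.range T :=
  kpromo_pow_q_labels_general q T hT1
end

section
/- Let A be an autonomous subset of a finite poset P, and let P' be the poset obtained from P by dualizing A. Then P' is a poset (the relation defined is reflexive, antisymmetric, and transitive), and P and P' have isomorphic comparability graphs (via the identity map on the ground set). -/
/-- Dualizing an autonomous subset `A` of a finite poset `P` yields a poset `P'`
(the associated "less-than-or-equal" relation is reflexive, antisymmetric and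
transitive), and `P` and `P'` have the same comparability graph (via the identity
map on the ground set). -/
theorem dualize_autonomous {α : Type*} [PartialOrder α] (A : Set α)
    (hA : ∀ b ∉ A, ∀ a ∈ A, ∀ a' ∈ A, (a < b ↔ a' < b) ∧ (b < a ↔ b < a'))
    (lt' : α → α → Prop)
    (hlt' : ∀ x y, lt' x y ↔
      ((x ∈ A ∧ y ∈ A ∧ y < x) ∨ (¬(x ∈ A ∧ y ∈ A) ∧ x < y))) :
    (∀ x : α, x = x ∨ lt' x x) ∧
    (∀ x y : α, (x = y ∨ lt' x y) → (y = x ∨ lt' y x) → x = y) ∧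
    (∀ x y z : α, (x = y ∨ lt' x y) → (y = z ∨ lt' y z) → (x = z ∨ lt' x z)) ∧
    (∀ x y : α, (lt' x y ∨ lt' y x) ↔ (x < y ∨ y < x)) := by
  have asymm : ∀ x y, lt' x y → lt' y x → False := by
    intro x y h1 h2
    rw [hlt'] at h1 h2
    rcases h1 with ⟨hx, hy, h1⟩ | ⟨hn, h1⟩ <;>
      rcases h2 with ⟨hy', hx', h2⟩ | ⟨hn', h2⟩
    · exact absurd (h1.trans h2) (lt_irrefl y)
    · exact hn' ⟨hy, hx⟩
    · exact hn ⟨hx', hy'⟩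
    · exact absurd (h1.trans h2) (lt_irrefl x)
  have trans : ∀ x y z, lt' x y → lt' y z → lt' x z := by
    intro x y z h1 h2
    rw [hlt'] at h1 h2 ⊢
    rcases h1 with ⟨hx, hy, h1⟩ | ⟨hn, h1⟩ <;>
      rcases h2 with ⟨hy', hz, h2⟩ | ⟨hn', h2⟩
    · exact Or.inl ⟨hx, hz, h2.trans h1⟩
    · -- x, y ∈ A, z ∉ A, y < x, y < z
      have hz : z ∉ A := fun hz => hn' ⟨hy, hz⟩
      have := (hA z hz y hy x hx).1
      exact Or.inr ⟨fun h => hz h.2, this.mp h2⟩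
    · -- y, z ∈ A, x ∉ A, x < y, z < y
      have hx : x ∉ A := fun hx => hn ⟨hx, hy'⟩
      have := (hA x hx y hy' z hz).2
      exact Or.inr ⟨fun h => hx h.1, this.mp h1⟩
    · -- x < y, y < z
      refine Or.inr ⟨fun h => ?_, h1.trans h2⟩
      obtain ⟨hx, hz⟩ := h
      have hy : y ∉ A := fun hy => hn ⟨hx, hy⟩
      have := (hA y hy x hx z hz).2
      exact absurd (h1.trans (this.mpr h2)) (lt_irrefl x)
  refine ⟨fun x => Or.inl rfl, ?_, ?_, ?_⟩
  · rintro x y (rfl | h1) h2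
    · rfl
    · rcases h2 with rfl | h2
      · rfl
      · exact absurd (asymm x y h1 h2) id
  · rintro x y z (rfl | h1) (rfl | h2)
    · exact Or.inl rfl
    · exact Or.inr h2
    · exact Or.inr h1
    · exact Or.inr (trans x y z h1 h2)
  · intro x y
    constructor
    · rintro (h | h) <;> rw [hlt'] at h <;>
        rcases h with ⟨_, _, h⟩ | ⟨_, h⟩
      · exact Or.inr h
      · exact Or.inl h
      · exact Or.inl h
      · exact Or.inr h
    · rintro (h | h)
      · by_cases hm : x ∈ A ∧ y ∈ A
        · exact Or.inr ((hlt' y x).mpr (Or.inl ⟨hm.2, hm.1, h⟩))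
        · exact Or.inl ((hlt' x y).mpr (Or.inr ⟨hm, h⟩))
      · by_cases hm : x ∈ A ∧ y ∈ A
        · exact Or.inl ((hlt' x y).mpr (Or.inl ⟨hm.1, hm.2, h⟩))
        · exact Or.inr ((hlt' y x).mpr (Or.inr ⟨fun h' => hm ⟨h'.2, h'.1⟩, h⟩))
end
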